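/- Let $\Psi = |\psi\rangle\langle\psi|$ be a rank-one orthogonal projector on $(\mathbb{C}^2)^{\otimes n}$ with $n = k + m + \ell$. Then $\sum_{W_y \in \mathcal{P}^k} \sum_{W_z \in \mathcal{P}_Z^m} \mathrm{Tr}\big((W_y \otimes W_z \otimes I_\ell)\Psi\big)^2 \le 2^{m+k}$, where $\mathcal{P}^k$ is the set of all $4^k$ $k$-qubit Pauli matrices and $\mathcal{P}_Z^m = \{I,Z\}^{\otimes m}$. -/

import Mathlib

open Matrix Finset Complex Kronecker

/-- Integer-valued dot product of two `𝔽₂` vectors. -/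
def dotVal {n : ℕ} (a b : Fin n → ZMod 2) : ℕ := ∑ j, (a j * b j).val

/-- The `n`-qubit Weyl (Pauli) operator `W_{(a,b)} = i^{a·b} ⊗_j X^{a_j} Z^{b_j}`. -/
def Weyl (n : ℕ) (a b : Fin n → ZMod 2) :
    Matrix (Fin n → ZMod 2) (Fin n → ZMod 2) ℂ :=
  fun x y => if x = a + y then Complex.I ^ dotVal a b * (-1 : ℂ) ^ dotVal b y else 0

/-!
The `Z`-type factors only contribute signs, so up to a phase
`Tr((W_{(a,b)} ⊗ Z^c ⊗ I_ℓ) Ψ)` is the Walsh–Hadamard coefficient at `(b, c)` of the band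
`(y₁, y₂) ↦ ρ((y₁, y₂), (a + y₁, y₂))` of the reduced state `ρ = Tr_ℓ Ψ`. By Parseval, summing
the squares over `b` and `c` gives `2^{k+m}` times the squared norm of that band. Cauchy–Schwarz
bounds `|ρ(x, x')|²` by `p(x) p(x')` for the diagonal `p` of `ρ`, and summing over all bands `a`
leaves `∑_{y₂} q(y₂)² ≤ (∑ q)² = 1`, where `q` is the marginal of `p` on the `Z`-block.
-/

open ComplexConjugate

lemma sum_neg_one_pow_val_mul (s t : ZMod 2) :
    ∑ x : ZMod 2, (-1 : ℂ) ^ (x * s).val * (-1) ^ (x * t).val = if s = t then 2 else 0 := by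
  have h01 : ∀ x : ZMod 2, x = 0 ∨ x = 1 := by decide
  rw [show (univ : Finset (ZMod 2)) = {0, 1} from rfl, sum_pair zero_ne_one]
  rcases h01 s with rfl | rfl <;> rcases h01 t with rfl | rfl <;> norm_num [ZMod.val_one]

lemma sum_neg_one_pow_dotVal_mul {n : ℕ} (u v : Fin n → ZMod 2) :
    ∑ b : Fin n → ZMod 2, (-1 : ℂ) ^ dotVal b u * (-1) ^ dotVal b v
      = if u = v then 2 ^ n else 0 := by
  simp only [dotVal, ← prod_pow_eq_pow_sum, ← prod_mul_distrib]
  rw [← Fintype.prod_sum (fun i t => (-1 : ℂ) ^ (t * u i).val * (-1) ^ (t * v i).val)]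
  simp only [sum_neg_one_pow_val_mul, prod_ite_zero, prod_const, card_univ, Fintype.card_fin,
    mem_univ, true_implies, funext_iff]

def walshTransform {n : ℕ} (f : (Fin n → ZMod 2) → ℂ) (b : Fin n → ZMod 2) : ℂ :=
  ∑ y, (-1 : ℂ) ^ dotVal b y * f y

theorem sum_norm_sq_walshTransform {n : ℕ} (f : (Fin n → ZMod 2) → ℂ) :
    ∑ b, ‖walshTransform f b‖ ^ 2 = 2 ^ n * ∑ y, ‖f y‖ ^ 2 := by
  apply Complex.ofReal_injective
  push_cast
  simp only [← mul_conj', walshTransform, map_sum, map_mul, map_pow, map_neg, map_one]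
  calc ∑ b, (∑ y, (-1) ^ dotVal b y * f y) * ∑ y', (-1) ^ dotVal b y' * conj (f y')
      = ∑ y, ∑ y', (∑ b, (-1 : ℂ) ^ dotVal b y * (-1) ^ dotVal b y') * (f y * conj (f y')) := by
        simp only [sum_mul_sum]
        rw [sum_comm]
        refine sum_congr rfl fun y _ => ?_
        rw [sum_comm]
        refine sum_congr rfl fun y' _ => ?_
        rw [sum_mul]
        exact sum_congr rfl fun b _ => by ring
    _ = 2 ^ n * ∑ y, f y * conj (f y) := by
        simp only [sum_neg_one_pow_dotVal_mul, ite_mul, zero_mul, sum_ite_eq, mem_univ, if_true,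
          mul_sum]

theorem sum_sum_norm_sq_walshTransform_nested {k m : ℕ}
    (F : (Fin k → ZMod 2) → (Fin m → ZMod 2) → ℂ) :
    ∑ b, ∑ c, ‖walshTransform (fun y₁ => walshTransform (F y₁) c) b‖ ^ 2
      = 2 ^ k * 2 ^ m * ∑ y₁, ∑ y₂, ‖F y₁ y₂‖ ^ 2 := by
  rw [sum_comm]
  simp only [sum_norm_sq_walshTransform, ← mul_sum]
  rw [sum_comm]
  simp only [sum_norm_sq_walshTransform, ← mul_sum, mul_assoc]

lemma norm_sum_mul_star_sq_le {ι : Type*} (s : Finset ι) (f g : ι → ℂ) :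
    ‖∑ i ∈ s, f i * star (g i)‖ ^ 2 ≤ (∑ i ∈ s, ‖f i‖ ^ 2) * ∑ i ∈ s, ‖g i‖ ^ 2 := by
  have h : ‖∑ i ∈ s, f i * star (g i)‖ ≤ ∑ i ∈ s, ‖f i‖ * ‖g i‖ :=
    (norm_sum_le _ _).trans_eq (sum_congr rfl fun i _ => by rw [norm_mul, norm_star])
  exact (pow_le_pow_left₀ (norm_nonneg _) h 2).trans (sum_mul_sq_le_sq_mul_sq _ _ _)

section ReducedDensity

variable {α β γ : Type*} [Fintype γ]

/-- The partial trace `Tr_γ |ψ⟩⟨ψ|`. -/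
def reducedDensity (ψ : α × β × γ → ℂ) (x x' : α × β) : ℂ :=
  ∑ w, ψ (x.1, x.2, w) * star (ψ (x'.1, x'.2, w))

noncomputable def marginal (ψ : α × β × γ → ℂ) (x : α × β) : ℝ :=
  ∑ w, ‖ψ (x.1, x.2, w)‖ ^ 2

lemma norm_reducedDensity_sq_le (ψ : α × β × γ → ℂ) (x x' : α × β) :
    ‖reducedDensity ψ x x'‖ ^ 2 ≤ marginal ψ x * marginal ψ x' :=
  norm_sum_mul_star_sq_le _ _ _

variable [Fintype α] [Fintype β]

lemma sum_sum_marginal (ψ : α × β × γ → ℂ) :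
    ∑ y₂, ∑ y₁, marginal ψ (y₁, y₂) = ∑ x, ‖ψ x‖ ^ 2 := by
  rw [sum_comm]
  simp only [marginal, Fintype.sum_prod_type]

theorem sum_norm_sq_reducedDensity_add_le [AddGroup α] (ψ : α × β × γ → ℂ) :
    ∑ a, ∑ y₁, ∑ y₂, ‖reducedDensity ψ (y₁, y₂) (a + y₁, y₂)‖ ^ 2 ≤ (∑ x, ‖ψ x‖ ^ 2) ^ 2 := by
  calc ∑ a, ∑ y₁, ∑ y₂, ‖reducedDensity ψ (y₁, y₂) (a + y₁, y₂)‖ ^ 2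
      ≤ ∑ a, ∑ y₁, ∑ y₂, marginal ψ (y₁, y₂) * marginal ψ (a + y₁, y₂) := by
        gcongr with a _ y₁ _ y₂ _
        exact norm_reducedDensity_sq_le _ _ _
    _ = ∑ y₁, ∑ y₂, ∑ a, marginal ψ (y₁, y₂) * marginal ψ (a + y₁, y₂) := by
        rw [sum_comm]
        exact sum_congr rfl fun _ _ => sum_comm
    _ = ∑ y₂, (∑ y₁, marginal ψ (y₁, y₂)) ^ 2 := by
        have hshift : ∀ y₁ y₂, ∑ a, marginal ψ (a + y₁, y₂) = ∑ u, marginal ψ (u, y₂) :=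
          fun y₁ y₂ => Equiv.sum_comp (Equiv.addRight y₁) fun u => marginal ψ (u, y₂)
        simp only [← mul_sum, hshift, sq, sum_mul]
        exact sum_comm
    _ ≤ (∑ x, ‖ψ x‖ ^ 2) ^ 2 := by
        rw [← sum_sum_marginal]
        exact sum_sq_le_sq_sum_of_nonneg fun y₂ _ =>
          sum_nonneg fun y₁ _ => sum_nonneg fun _ _ => sq_nonneg _

end ReducedDensity

lemma dotVal_zero_left {n : ℕ} (c : Fin n → ZMod 2) : dotVal 0 c = 0 := by
  simp [dotVal]

lemma weyl_kronecker_apply {k m : ℕ} {γ : Type*} [DecidableEq γ] (a b : Fin k → ZMod 2)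
    (c : Fin m → ZMod 2) (x y : (Fin k → ZMod 2) × (Fin m → ZMod 2) × γ) :
    (Weyl k a b ⊗ₖ (Weyl m 0 c ⊗ₖ (1 : Matrix γ γ ℂ))) x y
      = if x = (a + y.1, y.2) then I ^ dotVal a b * (-1) ^ dotVal b y.1 * (-1) ^ dotVal c y.2.1
        else 0 := by
  obtain ⟨x₁, x₂, x₃⟩ := x
  obtain ⟨y₁, y₂, y₃⟩ := y
  simp only [kroneckerMap_apply, Weyl, one_apply, dotVal_zero_left, zero_add, pow_zero, one_mul,
    Prod.mk.injEq]
  split_ifs <;> simp_all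

theorem trace_weyl_kronecker_mul_vecMulVec {k m : ℕ} {γ : Type*} [Fintype γ] [DecidableEq γ]
    (a b : Fin k → ZMod 2) (c : Fin m → ZMod 2)
    (ψ : (Fin k → ZMod 2) × (Fin m → ZMod 2) × γ → ℂ) :
    ((Weyl k a b ⊗ₖ (Weyl m 0 c ⊗ₖ (1 : Matrix γ γ ℂ))) * vecMulVec ψ (star ψ)).trace
      = I ^ dotVal a b *
          walshTransform
            (fun y₁ => walshTransform (fun y₂ => reducedDensity ψ (y₁, y₂) (a + y₁, y₂)) c) b := by
  rw [trace_mul_comm, vecMulVec_mul, trace_vecMulVec]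
  simp only [dotProduct, vecMul, weyl_kronecker_apply, mul_ite, mul_zero, sum_ite_eq',
    mem_univ, if_true, walshTransform, reducedDensity, mul_sum, Fintype.sum_prod_type,
    Pi.star_apply]
  exact sum_congr rfl fun y₁ _ => sum_congr rfl fun y₂ _ => sum_congr rfl fun y₃ _ => by ring

/-- For a rank-one projector `Ψ = |ψ⟩⟨ψ|` on `n = k + m + ℓ` qubits,
`∑_{W_y ∈ 𝒫^k} ∑_{W_z ∈ 𝒫_Z^m} Tr((W_y ⊗ W_z ⊗ I_ℓ) Ψ)² ≤ 2^{m+k}`. -/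
theorem sum_sq_trace_pauli_block_le (k m ℓ : ℕ)
    (ψ : (Fin k → ZMod 2) × (Fin m → ZMod 2) × (Fin ℓ → ZMod 2) → ℂ)
    (hψ : ∑ x, ‖ψ x‖ ^ 2 = 1) :
    ∑ a : Fin k → ZMod 2, ∑ b : Fin k → ZMod 2, ∑ c : Fin m → ZMod 2,
        (((Weyl k a b ⊗ₖ (Weyl m 0 c ⊗ₖ
            (1 : Matrix (Fin ℓ → ZMod 2) (Fin ℓ → ZMod 2) ℂ))) *
          Matrix.vecMulVec ψ (star ψ)).trace.re) ^ 2
      ≤ (2 : ℝ) ^ (m + k) := by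
  have hre : ∀ z : ℂ, z.re ^ 2 ≤ ‖z‖ ^ 2 := fun z =>
    sq_abs z.re ▸ pow_le_pow_left₀ (abs_nonneg _) (abs_re_le_norm z) 2
  calc _ ≤ ∑ a : Fin k → ZMod 2, ∑ b : Fin k → ZMod 2, ∑ c : Fin m → ZMod 2,
          ‖((Weyl k a b ⊗ₖ (Weyl m 0 c ⊗ₖ
            (1 : Matrix (Fin ℓ → ZMod 2) (Fin ℓ → ZMod 2) ℂ))) *
          Matrix.vecMulVec ψ (star ψ)).trace‖ ^ 2 :=
          sum_le_sum fun a _ => sum_le_sum fun b _ => sum_le_sum fun c _ => hre _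
    _ = 2 ^ k * 2 ^ m * ∑ a, ∑ y₁, ∑ y₂, ‖reducedDensity ψ (y₁, y₂) (a + y₁, y₂)‖ ^ 2 := by
        simp only [trace_weyl_kronecker_mul_vecMulVec, norm_mul, norm_pow, norm_I, one_pow,
          one_mul, sum_sum_norm_sq_walshTransform_nested, mul_sum]
    _ ≤ 2 ^ k * 2 ^ m * (∑ x, ‖ψ x‖ ^ 2) ^ 2 := by
        gcongr; exact sum_norm_sq_reducedDensity_add_le ψ
    _ = 2 ^ (m + k) := by rw [hψ, pow_add]; ring
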